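/- arXiv:2602.15965 — 2 statements merged into one kernel-verified Lean document; each statement's English description precedes it below -/
import Mathlib

section
/- For a signed P3109 format f, if a and b are finite values of f with exponent(a) ≥ exponent(b), |a+b| > M_hi, and s = sign(a+b) · M_hi (saturated sum), then both s − a and a + b − s are exactly representable in f. -/
/-- Finite value set of a signed P3109 format with precision `P` and
exponent range `emin ≤ emax`. -/
def Vf (P : ℕ) (emin emax : ℤ) : Set ℝ :=
  { x | ∃ m e : ℤ, |m| < 2 ^ P ∧ emin ≤ e ∧ e ≤ emax ∧
      x = (m : ℝ) * (2 : ℝ) ^ (e - (P : ℤ) + 1) }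

/-- Largest finite magnitude. -/
noncomputable def Mhi (P : ℕ) (emax : ℤ) : ℝ :=
  ((2 : ℝ) ^ P - 1) * (2 : ℝ) ^ (emax - (P : ℤ) + 1)

/-- Canonical exponent: `max (⌊log₂ |x|⌋) emin` for `x ≠ 0`, `emin` for `x = 0`. -/
noncomputable def expo (emin : ℤ) (x : ℝ) : ℤ :=
  if x = 0 then emin else max (Int.log 2 |x|) emin

/-- `s` is a faithful rounding of `r` in `V`: it is `r` itself if `r ∈ V`,
and otherwise a floating-point neighbor (predecessor or successor) of `r`. -/
def Faithful (V : Set ℝ) (r s : ℝ) : Prop :=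
  s ∈ V ∧ (r ∈ V → s = r) ∧
    ((s ≤ r ∧ ∀ v ∈ V, v ≤ r → v ≤ s) ∨ (r ≤ s ∧ ∀ v ∈ V, r ≤ v → s ≤ v))

/-- `s` is a round-to-nearest value of `r` in `V` (arbitrary tie-breaking). -/
def Nearest (V : Set ℝ) (r s : ℝ) : Prop :=
  s ∈ V ∧ ∀ v ∈ V, |s - r| ≤ |v - r|

/-! Up to a global sign change, `a + b > M_hi` and `s = M_hi`. As `|a| ≤ M_hi < a + b`, both
`s - a` and `a + b - s` lie in `[0, b]`, hence below `2 ^ (exponent b + 1) ≤ 2 ^ (exponent a + 1)`.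
`M_hi` is a multiple of the ulp `2 ^ (e - P + 1)` for every `e ≤ emax`, and the ulp of `a` is a
multiple of that of `b`; so `s - a` is a multiple of the ulp of `a` and `a + b - s` of that of
`b`, and each fits into `P` digits at that exponent. -/

noncomputable def ulpGrid (P : ℕ) (e : ℤ) : AddSubgroup ℝ :=
  AddSubgroup.zmultiples ((2 : ℝ) ^ (e - (P : ℤ) + 1))

lemma ulpGrid_anti {P : ℕ} {e e' : ℤ} (h : e ≤ e') : ulpGrid P e' ≤ ulpGrid P e := by
  refine AddSubgroup.zmultiples_le.mpr ?_
  have hulp :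
      (2 : ℝ) ^ (e' - (P : ℤ) + 1) = 2 ^ (e' - e).toNat • (2 : ℝ) ^ (e - (P : ℤ) + 1) := by
    rw [nsmul_eq_mul, Nat.cast_pow, Nat.cast_ofNat, ← zpow_natCast,
      Int.toNat_of_nonneg (sub_nonneg.mpr h), ← zpow_add₀ two_ne_zero]
    ring_nf
  rw [hulp]
  exact AddSubgroup.nsmul_mem _ (AddSubgroup.mem_zmultiples _) _

lemma two_zpow_succ_eq (P : ℕ) (e : ℤ) :
    (2 : ℝ) ^ (e + 1) = 2 ^ P * 2 ^ (e - (P : ℤ) + 1) := by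
  rw [← zpow_natCast, ← zpow_add₀ two_ne_zero]
  ring_nf

lemma mem_Vf_of_mem_ulpGrid {P : ℕ} {emin emax e : ℤ} {x : ℝ} (hx : x ∈ ulpGrid P e)
    (habs : |x| < 2 ^ (e + 1)) (h1 : emin ≤ e) (h2 : e ≤ emax) : x ∈ Vf P emin emax := by
  obtain ⟨k, rfl⟩ := AddSubgroup.mem_zmultiples_iff.mp (show x ∈ ulpGrid P e from hx)
  have hulp : (0 : ℝ) < 2 ^ (e - (P : ℤ) + 1) := zpow_pos two_pos _
  refine ⟨k, e, ?_, h1, h2, zsmul_eq_mul _ _⟩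
  rw [zsmul_eq_mul, abs_mul, abs_of_pos hulp, two_zpow_succ_eq P e] at habs
  exact_mod_cast lt_of_mul_lt_mul_right habs hulp.le

lemma emin_le_expo (emin : ℤ) (x : ℝ) : emin ≤ expo emin x := by
  unfold expo
  split_ifs <;> simp

lemma expo_neg (emin : ℤ) (x : ℝ) : expo emin (-x) = expo emin x := by
  simp [expo]

lemma abs_lt_two_zpow_expo (emin : ℤ) (x : ℝ) : |x| < 2 ^ (expo emin x + 1) := by
  unfold expo
  split_ifs with hx
  · simp [hx, zpow_pos]
  · calc |x| < 2 ^ (Int.log 2 |x| + 1) := mod_cast Int.lt_zpow_succ_log_self one_lt_two |x|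
      _ ≤ 2 ^ (max (Int.log 2 |x|) emin + 1) :=
        zpow_le_zpow_right₀ one_le_two (by gcongr; exact le_max_left _ _)

lemma expo_le_of_abs_lt {emin e : ℤ} {x : ℝ} (hx : |x| < 2 ^ (e + 1)) (he : emin ≤ e) :
    expo emin x ≤ e := by
  unfold expo
  split_ifs with h0
  · exact he
  · have : Int.log 2 |x| < e + 1 :=
      (Int.lt_zpow_iff_log_lt one_lt_two (abs_pos.mpr h0)).mp (mod_cast hx)
    omega

lemma neg_mem_Vf {P : ℕ} {emin emax : ℤ} {x : ℝ} (h : x ∈ Vf P emin emax) :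
    -x ∈ Vf P emin emax := by
  obtain ⟨m, e, hm, h1, h2, rfl⟩ := h
  exact ⟨-m, e, by rwa [abs_neg], h1, h2, by push_cast; ring⟩

lemma mem_ulpGrid_expo_of_mem_Vf {P : ℕ} {emin emax : ℤ} {x : ℝ} (h : x ∈ Vf P emin emax) :
    x ∈ ulpGrid P (expo emin x) ∧ expo emin x ≤ emax := by
  obtain ⟨m, e, hm, h1, h2, rfl⟩ := h
  have hulp : (0 : ℝ) < 2 ^ (e - (P : ℤ) + 1) := zpow_pos two_pos _
  have habs : |(m : ℝ) * 2 ^ (e - (P : ℤ) + 1)| < 2 ^ (e + 1) := by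
    rw [abs_mul, abs_of_pos hulp, two_zpow_succ_eq P e]
    exact mul_lt_mul_of_pos_right (mod_cast hm) hulp
  have hexpo := expo_le_of_abs_lt habs h1
  refine ⟨ulpGrid_anti hexpo ?_, hexpo.trans h2⟩
  rw [← zsmul_eq_mul]
  exact AddSubgroup.zsmul_mem _ (AddSubgroup.mem_zmultiples _) _

lemma Mhi_mem_ulpGrid {P : ℕ} {emax e : ℤ} (h : e ≤ emax) : Mhi P emax ∈ ulpGrid P e := by
  refine ulpGrid_anti h ?_
  have hM : Mhi P emax = (2 ^ P - 1 : ℕ) • (2 : ℝ) ^ (emax - (P : ℤ) + 1) := by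
    rw [nsmul_eq_mul, Mhi]
    push_cast [Nat.one_le_two_pow]
    ring
  rw [hM]
  exact AddSubgroup.nsmul_mem _ (AddSubgroup.mem_zmultiples _) _

lemma abs_le_Mhi_of_mem_Vf {P : ℕ} {emin emax : ℤ} {x : ℝ} (h : x ∈ Vf P emin emax) :
    |x| ≤ Mhi P emax := by
  obtain ⟨m, e, hm, -, h2, rfl⟩ := h
  have hm' : |(m : ℝ)| ≤ 2 ^ P - 1 := by
    have : |m| ≤ 2 ^ P - 1 := Int.le_sub_one_of_lt hm
    exact_mod_cast this
  rw [abs_mul, abs_of_pos (zpow_pos two_pos _ : (0 : ℝ) < 2 ^ (e - (P : ℤ) + 1)), Mhi]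
  exact mul_le_mul hm' (zpow_le_zpow_right₀ one_le_two (by omega)) (zpow_pos two_pos _).le
    ((abs_nonneg _).trans hm')

section PositiveOverflow

variable {P : ℕ} {emin emax : ℤ} {a b : ℝ}

lemma Mhi_sub_mem_Vf (ha : a ∈ Vf P emin emax) (hexp : expo emin b ≤ expo emin a)
    (hover : Mhi P emax < a + b) :
    Mhi P emax - a ∈ Vf P emin emax := by
  obtain ⟨ha_grid, ha_max⟩ := mem_ulpGrid_expo_of_mem_Vf ha
  refine mem_Vf_of_mem_ulpGrid (sub_mem (Mhi_mem_ulpGrid ha_max) ha_grid) ?_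
    (emin_le_expo emin a) ha_max
  have ha_le : a ≤ Mhi P emax := (le_abs_self a).trans (abs_le_Mhi_of_mem_Vf ha)
  have hb_lt : |b| < 2 ^ (expo emin a + 1) := (abs_lt_two_zpow_expo emin b).trans_le
    (zpow_le_zpow_right₀ one_le_two (by omega))
  rw [abs_of_nonneg (sub_nonneg.mpr ha_le)]
  linarith [le_abs_self b]

lemma add_sub_Mhi_mem_Vf (ha : a ∈ Vf P emin emax) (hb : b ∈ Vf P emin emax)
    (hexp : expo emin b ≤ expo emin a) (hover : Mhi P emax < a + b) :
    a + b - Mhi P emax ∈ Vf P emin emax := by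
  obtain ⟨ha_grid, -⟩ := mem_ulpGrid_expo_of_mem_Vf ha
  obtain ⟨hb_grid, hb_max⟩ := mem_ulpGrid_expo_of_mem_Vf hb
  refine mem_Vf_of_mem_ulpGrid
    (sub_mem (add_mem (ulpGrid_anti hexp ha_grid) hb_grid) (Mhi_mem_ulpGrid hb_max)) ?_
    (emin_le_expo emin b) hb_max
  rw [abs_of_pos (sub_pos.mpr hover)]
  linarith [le_abs_self a, le_abs_self b, abs_le_Mhi_of_mem_Vf ha, abs_lt_two_zpow_expo emin b]

end PositiveOverflow

theorem saturated_sum_representable_parts_general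
    (P : ℕ) (emin emax : ℤ)
    (a b s : ℝ) (ha : a ∈ Vf P emin emax) (hb : b ∈ Vf P emin emax)
    (hexp : expo emin b ≤ expo emin a)
    (hover : Mhi P emax < |a + b|)
    (hs : s = Real.sign (a + b) * Mhi P emax) :
    s - a ∈ Vf P emin emax ∧ a + b - s ∈ Vf P emin emax := by
  subst hs
  rcases lt_trichotomy (a + b) 0 with hneg | hzero | hpos
  · rw [abs_of_neg hneg] at hover
    rw [Real.sign_of_neg hneg]
    have hexp' : expo emin (-b) ≤ expo emin (-a) := by rwa [expo_neg, expo_neg]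
    have hover' : Mhi P emax < -a + -b := by linarith
    constructor
    · convert neg_mem_Vf (Mhi_sub_mem_Vf (neg_mem_Vf ha) hexp' hover') using 1
      ring
    · convert neg_mem_Vf (add_sub_Mhi_mem_Vf (neg_mem_Vf ha) (neg_mem_Vf hb) hexp' hover') using 1
      ring
  · rw [hzero, abs_zero] at hover
    linarith [abs_nonneg a, abs_le_Mhi_of_mem_Vf ha]
  · rw [abs_of_pos hpos] at hover
    rw [Real.sign_of_pos hpos, one_mul]
    exact ⟨Mhi_sub_mem_Vf ha hexp hover, add_sub_Mhi_mem_Vf ha hb hexp hover⟩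

theorem saturated_sum_representable_parts
    (P : ℕ) (emin emax : ℤ) (hP : 1 ≤ P) (he : emin ≤ emax)
    (a b s : ℝ) (ha : a ∈ Vf P emin emax) (hb : b ∈ Vf P emin emax)
    (hexp : expo emin b ≤ expo emin a)
    (hover : Mhi P emax < |a + b|)
    (hs : s = Real.sign (a + b) * Mhi P emax) :
    s - a ∈ Vf P emin emax ∧ a + b - s ∈ Vf P emin emax :=
  saturated_sum_representable_parts_general P emin emax a b s ha hb hexp hover hs
end

section
/- (ExtractScalar grid alignment) Under the ExtractScalar hypotheses: signed P3109 format f with P ≥ 2, σ = 2^i ∈ V_f, x ∈ V_f with |x| ≤ 2^(−j)·σ for an integer j ≥ 0, |σ + x| ≤ M_hi, and s a round-to-nearest value of σ + x; the high part x_h = s − σ is an integer multiple of 2^(−P)·σ. -/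
lemma two_zpow_pos' (a : ℤ) : (0:ℝ) < (2:ℝ)^a := zpow_pos (by norm_num) a

lemma grid_lemma (P : ℕ) (emin emax i : ℤ) (v : ℝ)
    (hv : v ∈ Vf P emin emax)
    (h : (2:ℝ)^(i-1) ≤ |v| ∨ i - 1 ≤ emin) :
    ∃ k : ℤ, v = (k:ℝ) * (2:ℝ)^(i - (P:ℤ)) := by
  obtain ⟨m, e, hm, hemin, hemax, hval⟩ := hv
  have hm' : (|m| : ℝ) < (2:ℝ)^(P:ℤ) := by
    push_cast
    exact_mod_cast hm
  have he : i - 1 ≤ e := by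
    rcases h with h | h
    · have h1 : |v| = (|m| : ℝ) * (2:ℝ)^(e - (P:ℤ) + 1) := by
        rw [hval, abs_mul, abs_of_pos (two_zpow_pos' _)]
      have h2 : |v| < (2:ℝ)^(e+1) := by
        rw [h1]
        calc (|m| : ℝ) * (2:ℝ)^(e - (P:ℤ) + 1)
            < (2:ℝ)^(P:ℤ) * (2:ℝ)^(e - (P:ℤ) + 1) := by
              exact mul_lt_mul_of_pos_right hm' (two_zpow_pos' _)
          _ = (2:ℝ)^(e+1) := by
              rw [← zpow_add₀ (by norm_num : (2:ℝ) ≠ 0)]; congr 1; ring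
      have := lt_of_le_of_lt h h2
      have := (zpow_lt_zpow_iff_right₀ (by norm_num : (1:ℝ) < 2)).mp this
      omega
    · omega
  refine ⟨m * 2 ^ (e + 1 - i).toNat, ?_⟩
  have hn : ((e + 1 - i).toNat : ℤ) = e + 1 - i := Int.toNat_of_nonneg (by omega)
  rw [hval]
  push_cast
  rw [← zpow_natCast (2:ℝ) (e+1-i).toNat, hn, mul_assoc,
    ← zpow_add₀ (by norm_num : (2:ℝ) ≠ 0)]
  congr 2
  ring

lemma le_emax' (P : ℕ) (emin emax c : ℤ) (v : ℝ)
    (hv : v ∈ Vf P emin emax) (h : (2:ℝ)^c ≤ |v|) : c ≤ emax := by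
  obtain ⟨m, e, hm, hemin, hemax, hval⟩ := hv
  have hm' : (|m| : ℝ) < (2:ℝ)^(P:ℤ) := by push_cast; exact_mod_cast hm
  have h1 : |v| = (|m| : ℝ) * (2:ℝ)^(e - (P:ℤ) + 1) := by
    rw [hval, abs_mul, abs_of_pos (two_zpow_pos' _)]
  have h2 : |v| < (2:ℝ)^(e+1) := by
    rw [h1]
    calc (|m| : ℝ) * (2:ℝ)^(e - (P:ℤ) + 1)
        < (2:ℝ)^(P:ℤ) * (2:ℝ)^(e - (P:ℤ) + 1) :=
          mul_lt_mul_of_pos_right hm' (two_zpow_pos' _)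
      _ = (2:ℝ)^(e+1) := by
          rw [← zpow_add₀ (by norm_num : (2:ℝ) ≠ 0)]; congr 1; ring
  have := lt_of_le_of_lt h h2
  have := (zpow_lt_zpow_iff_right₀ (by norm_num : (1:ℝ) < 2)).mp this
  omega
theorem extractScalar_grid_alignment
    (P : ℕ) (emin emax : ℤ) (hP : 2 ≤ P) (he : emin ≤ emax)
    (i j : ℤ) (hj : 0 ≤ j)
    (σ x s : ℝ)
    (hσ : σ = (2 : ℝ) ^ i) (hσV : σ ∈ Vf P emin emax)
    (hx : x ∈ Vf P emin emax) (hxb : |x| ≤ (2 : ℝ) ^ (-j) * σ)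
    (hbound : |σ + x| ≤ Mhi P emax)
    (hs : Nearest (Vf P emin emax) (σ + x) s) :
    ∃ k : ℤ, s - σ = (k : ℝ) * ((2 : ℝ) ^ (-(P : ℤ)) * σ) := by
  have h2ne : (2:ℝ) ≠ 0 := by norm_num
  have hu : (2:ℝ)^(-(P:ℤ)) * σ = (2:ℝ)^(i - (P:ℤ)) := by
    rw [hσ, ← zpow_add₀ h2ne]; congr 1; ring
  rw [hu]
  have hσpos : (0:ℝ) < σ := hσ ▸ two_zpow_pos' i
  have hσabs : (2:ℝ)^(i-1) ≤ |σ| := by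
    rw [abs_of_pos hσpos, hσ]
    exact zpow_le_zpow_right₀ (by norm_num) (by omega)
  obtain ⟨kσ, hkσ⟩ := grid_lemma P emin emax i σ hσV (Or.inl hσabs)
  by_cases h1 : i - 1 ≤ emin
  · obtain ⟨ks, hks⟩ := grid_lemma P emin emax i s hs.1 (Or.inr h1)
    exact ⟨ks - kσ, by rw [hks, hkσ]; push_cast; ring⟩
  · push_neg at h1
    have hiemax : i ≤ emax := le_emax' P emin emax i σ hσV (by
      rw [abs_of_pos hσpos, hσ])
    have hxσ : |x| ≤ σ := by
      refine hxb.trans ?_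
      calc (2:ℝ)^(-j) * σ ≤ 1 * σ := by
            apply mul_le_mul_of_nonneg_right _ hσpos.le
            exact zpow_le_one_of_nonpos₀ (by norm_num) (by omega)
        _ = σ := one_mul σ
    have hr0 : (0:ℝ) ≤ σ + x := by
      have := abs_le.mp hxσ
      linarith [this.1]
    by_cases h2 : (2:ℝ)^(i-1) ≤ σ + x
    · -- candidate 2^(i-1) ∈ Vf forces s ≥ 2^(i-1)
      have hv0 : (2:ℝ)^(i-1) ∈ Vf P emin emax := by
        refine ⟨2^(P-1), i-1, ?_, by omega, by omega, ?_⟩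
        · rw [abs_of_nonneg (by positivity)]
          exact pow_lt_pow_right₀ (by norm_num) (by omega)
        · push_cast
          rw [← zpow_natCast (2:ℝ) (P-1), ← zpow_add₀ h2ne]
          congr 1
          have : ((P-1 : ℕ) : ℤ) = (P:ℤ) - 1 := by
            have : (1:ℕ) ≤ P := by omega
            omega
          rw [this]; ring
      have hnear := hs.2 _ hv0
      have habs : |(2:ℝ)^(i-1) - (σ + x)| = (σ + x) - (2:ℝ)^(i-1) := by
        rw [abs_of_nonpos (by linarith)]; ring
      rw [habs] at hnear
      have hsge : (2:ℝ)^(i-1) ≤ s := by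
        have := (abs_le.mp hnear).1
        linarith
      have hsabs : (2:ℝ)^(i-1) ≤ |s| := le_trans hsge (le_abs_self s)
      obtain ⟨ks, hks⟩ := grid_lemma P emin emax i s hs.1 (Or.inl hsabs)
      exact ⟨ks - kσ, by rw [hks, hkσ]; push_cast; ring⟩
    · push_neg at h2
      -- x < -2^(i-1), so x is on the coarse grid
      have h2i : (2:ℝ)^i = 2 * (2:ℝ)^(i-1) := by
        calc (2:ℝ)^i = (2:ℝ)^(1+(i-1)) := by congr 1; ring
          _ = 2 * (2:ℝ)^(i-1) := zpow_one_add₀ h2ne _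
      have hxneg : x < -(2:ℝ)^(i-1) := by
        have : σ + x < (2:ℝ)^(i-1) := h2
        rw [hσ, h2i] at this
        linarith
      have hxabs : (2:ℝ)^(i-1) ≤ |x| := by
        rw [abs_of_neg (by nlinarith [two_zpow_pos' (i-1)])]
        linarith
      obtain ⟨kx, hkx⟩ := grid_lemma P emin emax i x hx (Or.inl hxabs)
      -- σ + x = (2^P + kx) * 2^(i-P)  and it lies in Vf, so s = σ + x
      set m : ℤ := 2^P + kx with hm_def
      have hupos : (0:ℝ) < (2:ℝ)^(i - (P:ℤ)) := two_zpow_pos' _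
      have hσu : σ = ((2:ℤ)^P : ℝ) * (2:ℝ)^(i - (P:ℤ)) := by
        rw [hσ]
        push_cast
        rw [← zpow_natCast (2:ℝ) P, ← zpow_add₀ h2ne]
        congr 1; ring
      have hru : σ + x = (m:ℝ) * (2:ℝ)^(i - (P:ℤ)) := by
        rw [hσu, hkx, hm_def]; push_cast; ring
      have hmlt : (m:ℝ) < ((2:ℤ)^P : ℝ) := by
        have h2P : ((2:ℤ)^P : ℝ) * (2:ℝ)^(i - (P:ℤ)) = (2:ℝ)^i := by
          push_cast
          rw [← zpow_natCast (2:ℝ) P, ← zpow_add₀ h2ne]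
          congr 1; ring
        have hlt : (m:ℝ) * (2:ℝ)^(i - (P:ℤ)) < ((2:ℤ)^P : ℝ) * (2:ℝ)^(i - (P:ℤ)) := by
          rw [← hru, h2P, ← hσ]
          nlinarith [two_zpow_pos' (i-1)]
        exact lt_of_mul_lt_mul_right hlt hupos.le
      have hm0 : (0:ℝ) ≤ (m:ℝ) := by
        have := hru ▸ hr0
        by_contra hc
        push_neg at hc
        nlinarith
      have hmabs : |m| < 2^P := by
        rw [abs_of_nonneg (by exact_mod_cast hm0)]
        exact_mod_cast hmlt
      have hrV : σ + x ∈ Vf P emin emax := by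
        refine ⟨m, i-1, hmabs, by omega, by omega, ?_⟩
        rw [hru]; congr 2; ring
      have hnear := hs.2 _ hrV
      rw [sub_self, abs_zero] at hnear
      have hseq : s = σ + x := by
        have := abs_nonneg (s - (σ + x))
        have h0 : |s - (σ + x)| = 0 := le_antisymm hnear this
        have := abs_eq_zero.mp h0
        linarith [sub_eq_zero.mp this]
      refine ⟨kx, ?_⟩
      rw [hseq, hkx]; ring
end
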